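/- Let ψ be a unit vector in ℂ²⊗ℂ²⊗ℂ², and let a, b, c be unit vectors in ℂ² such that the product state a⊗b⊗c maximizes the overlap with ψ in each tensor slot separately, i.e. |⟨a⊗b⊗c, ψ⟩| ≥ |⟨x⊗b⊗c, ψ⟩|, |⟨a⊗b⊗c, ψ⟩| ≥ |⟨a⊗x⊗c, ψ⟩| and |⟨a⊗b⊗c, ψ⟩| ≥ |⟨a⊗b⊗x, ψ⟩| for every unit vector x ∈ ℂ². Then for all unit vectors a', b', c' ∈ ℂ² with a' ⊥ a, b' ⊥ b, c' ⊥ c one has ⟨a'⊗b⊗c, ψ⟩ = ⟨a⊗b'⊗c, ψ⟩ = ⟨a⊗b⊗c', ψ⟩ = 0. -/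

import Mathlib

open scoped ComplexInnerProductSpace

/-- The product state `a ⊗ b ⊗ c` of three qubits, as a vector in
`ℂ² ⊗ ℂ² ⊗ ℂ² ≃ ℂ^(2×2×2)` with the standard inner product, so that
`⟪prod3 a b c, prod3 x y z⟫ = ⟪a,x⟫ * ⟪b,y⟫ * ⟪c,z⟫`. -/
noncomputable def prod3 (a b c : EuclideanSpace ℂ (Fin 2)) :
    EuclideanSpace ℂ (Fin 2 × Fin 2 × Fin 2) :=
  WithLp.toLp 2 (fun p : Fin 2 × Fin 2 × Fin 2 => a p.1 * b p.2.1 * c p.2.2)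

/-! Fixing two slots, the overlap is `x ↦ ⟪x, v⟫` with `v = T† ψ` for the linear map `T`
filling the third slot. A unit vector maximizing `‖⟪x, v⟫‖` attains equality in Cauchy–Schwarz,
so `v` lies on the line through the maximizer and is orthogonal to everything orthogonal to it. -/

section
variable {𝕜 E F : Type*} [RCLike 𝕜] [NormedAddCommGroup E] [InnerProductSpace 𝕜 E]
  [NormedAddCommGroup F] [InnerProductSpace 𝕜 F]

theorem inner_eq_zero_of_forall_norm_inner_le {v a a' : E} (ha : ‖a‖ = 1)
    (hmax : ∀ x : E, ‖x‖ = 1 → ‖inner 𝕜 x v‖ ≤ ‖inner 𝕜 a v‖) (h : inner 𝕜 a' a = 0) :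
    inner 𝕜 a' v = 0 := by
  rcases eq_or_ne v 0 with rfl | hv
  · exact inner_zero_right a'
  have hv_le : ‖v‖ ≤ ‖inner 𝕜 a v‖ := by
    simpa [inner_smul_left, inner_self_eq_norm_sq_to_K, hv, sq] using
      hmax ((‖v‖⁻¹ : 𝕜) • v) (norm_smul_inv_norm hv)
  have hcs : ‖inner 𝕜 a v‖ = ‖a‖ * ‖v‖ :=
    le_antisymm (norm_inner_le_norm a v) (by rwa [ha, one_mul])
  obtain ⟨r, -, rfl⟩ :=
    (norm_inner_eq_norm_iff (norm_ne_zero_iff.1 (ha ▸ one_ne_zero)) hv).1 hcs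
  rw [inner_smul_right, h, mul_zero]

theorem LinearMap.inner_map_eq_zero_of_forall_norm_inner_map_le [FiniteDimensional 𝕜 E]
    [FiniteDimensional 𝕜 F] (T : E →ₗ[𝕜] F) {ψ : F} {a a' : E} (ha : ‖a‖ = 1)
    (hmax : ∀ x : E, ‖x‖ = 1 → ‖inner 𝕜 (T x) ψ‖ ≤ ‖inner 𝕜 (T a) ψ‖)
    (h : inner 𝕜 a' a = 0) : inner 𝕜 (T a') ψ = 0 := by
  simp only [← LinearMap.adjoint_inner_right] at hmax ⊢
  exact inner_eq_zero_of_forall_norm_inner_le ha hmax h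

end

section
variable (a b c : EuclideanSpace ℂ (Fin 2))

noncomputable def prod3LinearLeft :
    EuclideanSpace ℂ (Fin 2) →ₗ[ℂ] EuclideanSpace ℂ (Fin 2 × Fin 2 × Fin 2) where
  toFun x := prod3 x b c
  map_add' x y := by ext; simp [prod3, add_mul]
  map_smul' r x := by ext; simp [prod3, mul_assoc]

noncomputable def prod3LinearMiddle :
    EuclideanSpace ℂ (Fin 2) →ₗ[ℂ] EuclideanSpace ℂ (Fin 2 × Fin 2 × Fin 2) where
  toFun x := prod3 a x c
  map_add' x y := by ext; simp [prod3, mul_add, add_mul]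
  map_smul' r x := by ext; simp [prod3, mul_assoc, mul_left_comm]

noncomputable def prod3LinearRight :
    EuclideanSpace ℂ (Fin 2) →ₗ[ℂ] EuclideanSpace ℂ (Fin 2 × Fin 2 × Fin 2) where
  toFun x := prod3 a b x
  map_add' x y := by ext; simp [prod3, mul_add]
  map_smul' r x := by ext; simp [prod3, mul_left_comm]

end

theorem prop1_three_qubits (ψ : EuclideanSpace ℂ (Fin 2 × Fin 2 × Fin 2))
    (a b c : EuclideanSpace ℂ (Fin 2)) (ha : ‖a‖ = 1) (hb : ‖b‖ = 1) (hc : ‖c‖ = 1)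
    (hmax₁ : ∀ x : EuclideanSpace ℂ (Fin 2), ‖x‖ = 1 →
      ‖⟪prod3 x b c, ψ⟫‖ ≤ ‖⟪prod3 a b c, ψ⟫‖)
    (hmax₂ : ∀ x : EuclideanSpace ℂ (Fin 2), ‖x‖ = 1 →
      ‖⟪prod3 a x c, ψ⟫‖ ≤ ‖⟪prod3 a b c, ψ⟫‖)
    (hmax₃ : ∀ x : EuclideanSpace ℂ (Fin 2), ‖x‖ = 1 →
      ‖⟪prod3 a b x, ψ⟫‖ ≤ ‖⟪prod3 a b c, ψ⟫‖) :
    ∀ a' b' c' : EuclideanSpace ℂ (Fin 2), ‖a'‖ = 1 → ‖b'‖ = 1 → ‖c'‖ = 1 →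
      ⟪a', a⟫ = 0 → ⟪b', b⟫ = 0 → ⟪c', c⟫ = 0 →
      ⟪prod3 a' b c, ψ⟫ = 0 ∧ ⟪prod3 a b' c, ψ⟫ = 0 ∧ ⟪prod3 a b c', ψ⟫ = 0 :=
  fun _ _ _ _ _ _ hperp₁ hperp₂ hperp₃ =>
    ⟨(prod3LinearLeft b c).inner_map_eq_zero_of_forall_norm_inner_map_le ha hmax₁ hperp₁,
      (prod3LinearMiddle a c).inner_map_eq_zero_of_forall_norm_inner_map_le hb hmax₂ hperp₂,
      (prod3LinearRight a b).inner_map_eq_zero_of_forall_norm_inner_map_le hc hmax₃ hperp₃⟩
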